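/- With the same setup, for every m ∈ ℤ one has S_m(E-F) = ∑_{p=0}^{rk F} c_p(F^∨) ∑_{q=0}^{p} C(p,q) β^q S_{m-p+q}(E), where c_p(F^∨) is the p-th elementary symmetric polynomial in the elements ȳ_j = -y_j/(1+βy_j) for Chern roots y_j of F, and C(p,q) denotes the binomial coefficient. -/

import Mathlib

/-!
With `β = uv`, the root identity `(1 + ȳ (u + β)) (1 + y β) = 1 - y u` gives
`c(F;-u) / c(F;β) = ∏ⱼ (1 + ȳⱼ (u + β)) = ∑ₚ cₚ(F^∨) (u + β)ᵖ`, hence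
`S(E-F;u) = ∑ₚ cₚ(F^∨) (u + β)ᵖ S(E;u)`. Taking the coefficient of `uᵐ` after the
substitution `v = βu⁻¹`, for which series in `β` are scalars, and expanding `(u + β)ᵖ`
binomially yields the identity.
-/

namespace Segre

variable (R : Type*) [CommRing R]

/-- `v = βu⁻¹` and `u`: the Segre series lives in `R[[v,u]]` (`β = uv`). -/
noncomputable def v : MvPowerSeries (Fin 2) R := MvPowerSeries.X 0
noncomputable def u : MvPowerSeries (Fin 2) R := MvPowerSeries.X 1

/-- The Chern polynomial `c(E;t) = ∑_{i=0}^{e} cᵢ(E) tⁱ` evaluated at `t`. -/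
noncomputable def cpoly (c : ℕ → R) (e : ℕ) (t : MvPowerSeries (Fin 2) R) :
    MvPowerSeries (Fin 2) R :=
  ∑ i ∈ Finset.range (e + 1), MvPowerSeries.C (c i) * t ^ i

/-- The full Segre series
`S(E-F;u) = (1+βu⁻¹)⁻¹ c(E;β)c(F;-u)/(c(E;-u)c(F;β))` in `R[[v,u]]`. -/
noncomputable def segreSeries (cE : ℕ → R) (e : ℕ) (cF : ℕ → R) (f : ℕ) :
    MvPowerSeries (Fin 2) R :=
  (cpoly R cE e (u R * v R) * cpoly R cF f (-(u R))) *
    MvPowerSeries.invOfUnit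
      ((1 + v R) * cpoly R cE e (-(u R)) * cpoly R cF f (u R * v R)) 1

/-- The Segre class `S_m(E-F)` as a power series in `β`. -/
noncomputable def segreClass (cE : ℕ → R) (e : ℕ) (cF : ℕ → R) (f : ℕ)
    (m : ℤ) : PowerSeries R :=
  PowerSeries.mk fun k =>
    if 0 ≤ m + (k : ℤ) then
      MvPowerSeries.coeff
        (Finsupp.single (0 : Fin 2) k
          + Finsupp.single (1 : Fin 2) (m + (k : ℤ)).toNat)
        (segreSeries R cE e cF f)
    else 0

/-- `S_m(E)`, the Segre class of `E` alone. -/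
noncomputable def segreClassE (cE : ℕ → R) (e : ℕ) (m : ℤ) : PowerSeries R :=
  segreClass R cE e (fun i => if i = 0 then 1 else 0) 0 m

/-- `ȳⱼ = -yⱼ/(1+βyⱼ)` for a Chern root `yⱼ` of `F`, as a power series in `β`. -/
noncomputable def rootBar (y : R) : PowerSeries R :=
  (-(PowerSeries.C y)) *
    PowerSeries.invOfUnit (1 + PowerSeries.C y * PowerSeries.X) 1

/-- `c_p(F^∨)`: the `p`-th elementary symmetric polynomial of the `ȳⱼ`. -/
noncomputable def chernDual (f : ℕ) (y : Fin f → R) (p : ℕ) : PowerSeries R :=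
  ∑ s ∈ Finset.univ.powersetCard p, ∏ j ∈ s, rootBar R (y j)

open Finset

@[simp]
lemma constantCoeff_u : MvPowerSeries.constantCoeff (u R) = 0 :=
  MvPowerSeries.constantCoeff_X _

@[simp]
lemma constantCoeff_v : MvPowerSeries.constantCoeff (v R) = 0 :=
  MvPowerSeries.constantCoeff_X _

/-- The substitution `β ↦ uv`. -/
noncomputable def betaHom : PowerSeries R →ₐ[R] MvPowerSeries (Fin 2) R :=
  PowerSeries.substAlgHom (PowerSeries.HasSubst.of_constantCoeff_zero (a := u R * v R) (by simp))

lemma betaHom_X : betaHom R PowerSeries.X = u R * v R :=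
  PowerSeries.substAlgHom_X (a := u R * v R) _

lemma betaHom_C (a : R) : betaHom R (PowerSeries.C a) = MvPowerSeries.C a :=
  (betaHom R).commutes a

/-- Substituting `v = βu⁻¹` turns `vᵏ u^(m+k)` into `βᵏ uᵐ`; `uCoeff m` reads off the
coefficient of `uᵐ`, a power series in `β`. -/
noncomputable def uCoeff (m : ℤ) : MvPowerSeries (Fin 2) R →ₗ[R] PowerSeries R where
  toFun S := PowerSeries.mk fun k =>
    if 0 ≤ m + k then
      MvPowerSeries.coeff (Finsupp.single 0 k + Finsupp.single 1 (m + k).toNat) S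
    else 0
  map_add' S T := by
    ext k
    simp only [PowerSeries.coeff_mk, map_add]
    split_ifs <;> simp
  map_smul' a S := by
    ext k
    simp only [PowerSeries.coeff_mk, map_smul, RingHom.id_apply, smul_ite, smul_zero]

lemma coeff_uCoeff (m : ℤ) (S : MvPowerSeries (Fin 2) R) (k : ℕ) :
    PowerSeries.coeff k (uCoeff R m S) =
      if 0 ≤ m + k then
        MvPowerSeries.coeff (Finsupp.single 0 k + Finsupp.single 1 (m + k).toNat) S
      else 0 := by
  simp only [uCoeff, LinearMap.coe_mk, AddHom.coe_mk, PowerSeries.coeff_mk]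

lemma segreClass_eq_uCoeff (cE : ℕ → R) (e : ℕ) (cF : ℕ → R) (f : ℕ) (m : ℤ) :
    segreClass R cE e cF f m = uCoeff R m (segreSeries R cE e cF f) :=
  rfl

lemma single_add_single_le_iff {a b c d : ℕ} :
    Finsupp.single (0 : Fin 2) a + Finsupp.single 1 b ≤ Finsupp.single 0 c + Finsupp.single 1 d ↔
      a ≤ c ∧ b ≤ d := by
  simp [Finsupp.le_def, Fin.forall_fin_two]

lemma single_add_single_tsub (a b c d : ℕ) :
    Finsupp.single (0 : Fin 2) c + Finsupp.single 1 d - (Finsupp.single 0 a + Finsupp.single 1 b) =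
      Finsupp.single 0 (c - a) + Finsupp.single 1 (d - b) := by
  ext i
  fin_cases i <;> simp

lemma uCoeff_u_pow_mul (m : ℤ) (r : ℕ) (S : MvPowerSeries (Fin 2) R) :
    uCoeff R m (u R ^ r * S) = uCoeff R (m - r) S := by
  ext k
  have hu : u R ^ r = MvPowerSeries.monomial (Finsupp.single 0 0 + Finsupp.single 1 r) 1 := by
    rw [Finsupp.single_zero, zero_add]
    exact MvPowerSeries.X_pow_eq _ _
  simp only [coeff_uCoeff, hu, MvPowerSeries.coeff_monomial_mul, single_add_single_le_iff,
    single_add_single_tsub, one_mul]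
  split_ifs <;> first | omega | (congr 4 <;> omega)

lemma uCoeff_u_mul_v_mul (m : ℤ) (S : MvPowerSeries (Fin 2) R) :
    uCoeff R m (u R * v R * S) = PowerSeries.X * uCoeff R m S := by
  ext k
  have huv : u R * v R = MvPowerSeries.monomial (Finsupp.single 0 1 + Finsupp.single 1 1) 1 := by
    rw [u, v, MvPowerSeries.X, MvPowerSeries.X, MvPowerSeries.monomial_mul_monomial, one_mul,
      add_comm]
  simp only [coeff_uCoeff, huv, MvPowerSeries.coeff_monomial_mul, single_add_single_le_iff,
    single_add_single_tsub, one_mul]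
  rcases k with _ | k
  · simp
  · rw [PowerSeries.coeff_succ_X_mul, coeff_uCoeff]
    split_ifs <;> first | omega | (congr 4 <;> omega)

lemma uCoeff_C_mul (m : ℤ) (a : R) (S : MvPowerSeries (Fin 2) R) :
    uCoeff R m (MvPowerSeries.C a * S) = PowerSeries.C a * uCoeff R m S := by
  rw [← MvPowerSeries.smul_eq_C_mul, map_smul, PowerSeries.smul_eq_C_mul]

lemma uCoeff_betaHom_mul (m : ℤ) (P : PowerSeries R) (S : MvPowerSeries (Fin 2) R) :
    uCoeff R m (betaHom R P * S) = P * uCoeff R m S := by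
  set D : PowerSeries R → PowerSeries R :=
    fun Q => uCoeff R m (betaHom R Q * S) - Q * uCoeff R m S
  -- Splitting off the constant term, the defect `D Q` is divisible by `β`, hence by all its powers.
  have hD : ∀ Q, D Q = PowerSeries.X * D (PowerSeries.mk fun n => PowerSeries.coeff (n + 1) Q) := by
    intro Q
    conv_lhs => rw [PowerSeries.eq_X_mul_shift_add_const Q]
    simp only [D, map_add, map_mul, betaHom_X, betaHom_C, add_mul, mul_assoc (u R * v R),
      uCoeff_u_mul_v_mul, uCoeff_C_mul]
    ring
  have hcoeff : ∀ k Q, PowerSeries.coeff k (D Q) = 0 := by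
    intro k
    induction k with
    | zero => intro Q; rw [hD, PowerSeries.coeff_zero_X_mul]
    | succ k ih => intro Q; rw [hD, PowerSeries.coeff_succ_X_mul, ih]
  exact sub_eq_zero.mp (PowerSeries.ext fun k => by rw [hcoeff, map_zero])

lemma uCoeff_u_add_u_mul_v_pow_mul (m : ℤ) (p : ℕ) (S : MvPowerSeries (Fin 2) R) :
    uCoeff R m ((u R + u R * v R) ^ p * S) =
      ∑ q ∈ range (p + 1),
        ((p.choose q : ℕ) : PowerSeries R) * PowerSeries.X ^ q * uCoeff R (m - p + q) S := by
  have hbinom : (u R + u R * v R) ^ p =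
      ∑ q ∈ range (p + 1),
        betaHom R (((p.choose q : ℕ) : PowerSeries R) * PowerSeries.X ^ q) * u R ^ (p - q) := by
    rw [add_comm, add_pow]
    refine sum_congr rfl fun q _ => ?_
    rw [map_mul, map_natCast, map_pow, betaHom_X]
    ring
  rw [hbinom, sum_mul, map_sum]
  refine sum_congr rfl fun q hq => ?_
  rw [mul_assoc, uCoeff_betaHom_mul, uCoeff_u_pow_mul,
    Nat.cast_sub (Nat.le_of_lt_succ (mem_range.mp hq)), sub_sub_eq_add_sub, add_sub_right_comm]

lemma prod_one_add_mul {A ι : Type*} [CommSemiring A] (s : Finset ι) (z : ι → A) (t : A) :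
    ∏ j ∈ s, (1 + z j * t) =
      ∑ p ∈ range (#s + 1), (∑ w ∈ s.powersetCard p, ∏ j ∈ w, z j) * t ^ p := by
  rw [prod_one_add, sum_powerset]
  refine sum_congr rfl fun p _ => ?_
  rw [sum_mul]
  refine sum_congr rfl fun w hw => ?_
  rw [prod_mul_distrib, prod_const, (mem_powersetCard.mp hw).2]

lemma cpoly_esymm {f : ℕ} (y : Fin f → R) (t : MvPowerSeries (Fin 2) R) :
    cpoly R (fun p => ∑ s ∈ univ.powersetCard p, ∏ j ∈ s, y j) f t =
      ∏ j, (1 + MvPowerSeries.C (y j) * t) := by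
  rw [prod_one_add_mul, card_univ, Fintype.card_fin, cpoly]
  simp only [map_sum, map_prod]

lemma cpoly_one (t : MvPowerSeries (Fin 2) R) :
    cpoly R (fun i => if i = 0 then 1 else 0) 0 t = 1 := by
  simp [cpoly]

lemma constantCoeff_cpoly (c : ℕ → R) (e : ℕ) {t : MvPowerSeries (Fin 2) R}
    (ht : MvPowerSeries.constantCoeff t = 0) :
    MvPowerSeries.constantCoeff (cpoly R c e t) = c 0 := by
  simp [cpoly, ht, sum_range_succ']

lemma mul_invOfUnit_mul_right {σ : Type*} {a b : MvPowerSeries σ R}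
    (ha : MvPowerSeries.constantCoeff a = 1) (hb : MvPowerSeries.constantCoeff b = 1) :
    b * MvPowerSeries.invOfUnit (a * b) 1 = MvPowerSeries.invOfUnit a 1 := by
  have hab := MvPowerSeries.mul_invOfUnit (a * b) 1 (by simp [ha, hb])
  have ha' := MvPowerSeries.mul_invOfUnit a 1 (by simp [ha])
  linear_combination (-(b * MvPowerSeries.invOfUnit (a * b) 1)) * ha' +
    MvPowerSeries.invOfUnit a 1 * hab

lemma one_add_betaHom_rootBar_mul (y : R) :
    (1 + betaHom R (rootBar R y) * (u R + u R * v R)) * (1 + MvPowerSeries.C y * (u R * v R)) =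
      1 + MvPowerSeries.C y * -u R := by
  have hinv := congrArg (betaHom R)
    (PowerSeries.mul_invOfUnit (1 + PowerSeries.C y * PowerSeries.X) 1 (by simp))
  simp only [map_mul, map_add, map_one, betaHom_C, betaHom_X] at hinv
  rw [rootBar, map_mul, map_neg, betaHom_C]
  linear_combination (-(MvPowerSeries.C y) * (u R + u R * v R)) * hinv

lemma sum_betaHom_chernDual_mul_cpoly {f : ℕ} (y : Fin f → R) :
    (∑ p ∈ range (f + 1), betaHom R (chernDual R f y p) * (u R + u R * v R) ^ p) *
        cpoly R (fun p => ∑ s ∈ univ.powersetCard p, ∏ j ∈ s, y j) f (u R * v R) =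
      cpoly R (fun p => ∑ s ∈ univ.powersetCard p, ∏ j ∈ s, y j) f (-u R) := by
  have hprod : ∑ p ∈ range (f + 1), betaHom R (chernDual R f y p) * (u R + u R * v R) ^ p =
      ∏ j, (1 + betaHom R (rootBar R (y j)) * (u R + u R * v R)) := by
    rw [prod_one_add_mul, card_univ, Fintype.card_fin]
    simp only [chernDual, map_sum, map_prod]
  rw [hprod, cpoly_esymm, cpoly_esymm, ← prod_mul_distrib]
  exact prod_congr rfl fun j _ => one_add_betaHom_rootBar_mul R (y j)

lemma segreSeries_esymm {f : ℕ} (cE : ℕ → R) (e : ℕ) (y : Fin f → R) (hcE0 : cE 0 = 1) :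
    segreSeries R cE e (fun p => ∑ s ∈ univ.powersetCard p, ∏ j ∈ s, y j) f =
      (∑ p ∈ range (f + 1), betaHom R (chernDual R f y p) * (u R + u R * v R) ^ p) *
        segreSeries R cE e (fun i => if i = 0 then 1 else 0) 0 := by
  have hE : MvPowerSeries.constantCoeff ((1 + v R) * cpoly R cE e (-u R)) = 1 := by
    simp [constantCoeff_cpoly, hcE0]
  have hF : MvPowerSeries.constantCoeff
      (cpoly R (fun p => ∑ s ∈ univ.powersetCard p, ∏ j ∈ s, y j) f (u R * v R)) = 1 := by
    simp [constantCoeff_cpoly]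
  rw [segreSeries, segreSeries, cpoly_one, cpoly_one, mul_one, mul_one,
    ← sum_betaHom_chernDual_mul_cpoly, ← mul_invOfUnit_mul_right R hE hF]
  ring

/-- identity (2.3):
`S_m(E-F) = ∑_{p=0}^{rk F} c_p(F^∨) ∑_{q=0}^{p} C(p,q) β^q S_{m-p+q}(E)`,
where `F` has Chern roots `y₁,…,y_f`, so `c_p(F) = e_p(y)` and
`c_p(F^∨) = e_p(ȳ)` with `ȳⱼ = -yⱼ/(1+βyⱼ)`. -/
theorem segre_relation_2_3 (cE : ℕ → R) (e : ℕ) (f : ℕ) (y : Fin f → R)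
    (hcE0 : cE 0 = 1) :
    ∀ m : ℤ,
      segreClass R cE e
          (fun p => ∑ s ∈ Finset.univ.powersetCard p, ∏ j ∈ s, y j) f m =
        ∑ p ∈ Finset.range (f + 1),
          chernDual R f y p *
            ∑ q ∈ Finset.range (p + 1),
              ((p.choose q : ℕ) : PowerSeries R) * PowerSeries.X ^ q *
                segreClassE R cE e (m - p + q) := by
  intro m
  rw [segreClass_eq_uCoeff, segreSeries_esymm R cE e y hcE0, sum_mul, map_sum]
  refine sum_congr rfl fun p _ => ?_
  rw [mul_assoc, uCoeff_betaHom_mul, uCoeff_u_add_u_mul_v_pow_mul]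
  simp only [segreClassE, segreClass_eq_uCoeff]

end Segre
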